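/- arXiv:0805.0209 — 3 statements merged into one kernel-verified Lean document; each statement's English description precedes it below -/
import Mathlib

section
/- For bounded subsets M, N of a Banach algebra A, the joint spectral radius of the set of multiplication operators L_M R_N = {L_a R_b : a ∈ M, b ∈ N} satisfies ρ(L_M R_N) ≤ ρ(M)ρ(N), where L_a x = ax and R_b x = xb. -/
open scoped Pointwise

/-- The norm of a bounded set: supremum of the norms of its elements. -/
noncomputable def setNorm {A : Type*} [NormedRing A] (M : Set A) : ℝ :=
  sSup ((fun a => ‖a‖) '' M)

/-- The joint spectral radius of a bounded subset of a normed algebra: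
`ρ(M) = inf_n ‖M^n‖^{1/n}`. -/
noncomputable def jsr {A : Type*} [NormedRing A] (M : Set A) : ℝ :=
  ⨅ n : ℕ+, (setNorm (M ^ (n : ℕ))) ^ ((n : ℝ)⁻¹)

/-- Left multiplication operator `L_a : x ↦ a x`. -/
noncomputable def Lmul {A : Type*} [NormedRing A] [NormedAlgebra ℂ A] (a : A) : A →L[ℂ] A :=
  ContinuousLinearMap.mul ℂ A a

/-- Right multiplication operator `R_b : x ↦ x b`. -/
noncomputable def Rmul {A : Type*} [NormedRing A] [NormedAlgebra ℂ A] (b : A) : A →L[ℂ] A :=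
  (ContinuousLinearMap.mul ℂ A).flip b

/-- The family `L_M R_N = {L_a R_b : a ∈ M, b ∈ N}` of two-sided multiplication
operators. -/
noncomputable def LR {A : Type*} [NormedRing A] [NormedAlgebra ℂ A] (M N : Set A) :
    Set (A →L[ℂ] A) :=
  {T | ∃ a ∈ M, ∃ b ∈ N, T = (Lmul a).comp (Rmul b)}

section aux

open Bornology

variable {A : Type*} [NormedRing A]

lemma setNorm_nonneg' (M : Set A) : 0 ≤ setNorm M :=
  Real.sSup_nonneg (by rintro x ⟨a, -, rfl⟩; exact norm_nonneg a)

lemma bddAbove_norm_image' {M : Set A} (h : IsBounded M) :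
    BddAbove ((fun a => ‖a‖) '' M) := by
  obtain ⟨C, hC⟩ := isBounded_iff_forall_norm_le.1 h
  exact ⟨C, by rintro x ⟨a, ha, rfl⟩; exact hC a ha⟩

lemma norm_le_setNorm' {M : Set A} (h : IsBounded M) {a : A} (ha : a ∈ M) :
    ‖a‖ ≤ setNorm M :=
  le_csSup (bddAbove_norm_image' h) ⟨a, ha, rfl⟩

lemma setNorm_mul_le' {M N : Set A} (hM : IsBounded M) (hN : IsBounded N) :
    setNorm (M * N) ≤ setNorm M * setNorm N := by
  apply Real.sSup_le
  · rintro x ⟨c, hc, rfl⟩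
    obtain ⟨a, ha, b, hb, rfl⟩ := hc
    calc ‖a * b‖ ≤ ‖a‖ * ‖b‖ := norm_mul_le a b
      _ ≤ setNorm M * setNorm N :=
        mul_le_mul (norm_le_setNorm' hM ha) (norm_le_setNorm' hN hb) (norm_nonneg b)
          (setNorm_nonneg' M)
  · exact mul_nonneg (setNorm_nonneg' M) (setNorm_nonneg' N)

lemma isBounded_mul' {M N : Set A} (hM : IsBounded M) (hN : IsBounded N) :
    IsBounded (M * N) := by
  obtain ⟨C, hC⟩ := isBounded_iff_forall_norm_le.1 hM
  obtain ⟨D, hD⟩ := isBounded_iff_forall_norm_le.1 hN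
  refine isBounded_iff_forall_norm_le.2 ⟨(max C 0) * (max D 0), ?_⟩
  rintro x ⟨a, ha, b, hb, rfl⟩
  calc ‖a * b‖ ≤ ‖a‖ * ‖b‖ := norm_mul_le a b
    _ ≤ (max C 0) * (max D 0) :=
      mul_le_mul ((hC a ha).trans (le_max_left _ _)) ((hD b hb).trans (le_max_left _ _))
        (norm_nonneg b) (le_max_right _ _)

lemma isBounded_pow' {M : Set A} (h : IsBounded M) (n : ℕ) : IsBounded (M ^ n) := by
  induction n with
  | zero =>
    rw [pow_zero]
    have : (1 : Set A) = {(1 : A)} := rfl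
    rw [this]
    exact Bornology.isBounded_singleton
  | succ k ih => rw [pow_succ]; exact isBounded_mul' ih h

lemma setNorm_pow_le' {M : Set A} (h : IsBounded M) {k : ℕ} (hk : 1 ≤ k) :
    setNorm (M ^ k) ≤ setNorm M ^ k := by
  induction k, hk using Nat.le_induction with
  | base => simp [pow_one]
  | succ n hn ih =>
    rw [pow_succ, pow_succ]
    calc setNorm (M ^ n * M) ≤ setNorm (M ^ n) * setNorm M :=
          setNorm_mul_le' (isBounded_pow' h n) h
      _ ≤ setNorm M ^ n * setNorm M :=
          mul_le_mul_of_nonneg_right ih (setNorm_nonneg' M)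

lemma rpow_pow_aux {M : Set A} (hM : IsBounded M) (m k : ℕ+) :
    setNorm (M ^ ((m * k : ℕ+) : ℕ)) ^ (((m * k : ℕ+) : ℝ))⁻¹ ≤
      setNorm (M ^ (m : ℕ)) ^ ((m : ℝ))⁻¹ := by
  set s := setNorm (M ^ (m : ℕ)) with hs_def
  have hs : 0 ≤ s := setNorm_nonneg' _
  have hmk : ((m * k : ℕ+) : ℕ) = (m : ℕ) * (k : ℕ) := rfl
  have h1 : setNorm (M ^ ((m * k : ℕ+) : ℕ)) ≤ s ^ (k : ℕ) := by
    rw [hmk, pow_mul]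
    exact setNorm_pow_le' (isBounded_pow' hM (m : ℕ)) k.one_le
  calc setNorm (M ^ ((m * k : ℕ+) : ℕ)) ^ (((m * k : ℕ+) : ℝ))⁻¹
      ≤ (s ^ (k : ℕ)) ^ (((m * k : ℕ+) : ℝ))⁻¹ :=
        Real.rpow_le_rpow (setNorm_nonneg' _) h1 (by positivity)
    _ = s ^ ((m : ℝ))⁻¹ := by
        rw [← Real.rpow_natCast s (k : ℕ), ← Real.rpow_mul hs]
        congr 1
        have hm : ((m : ℕ) : ℝ) ≠ 0 := Nat.cast_ne_zero.2 m.ne_zero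
        have hk : ((k : ℕ) : ℝ) ≠ 0 := Nat.cast_ne_zero.2 k.ne_zero
        have : ((m * k : ℕ+) : ℝ) = ((m : ℕ) : ℝ) * ((k : ℕ) : ℝ) := by push_cast; ring
        rw [this]
        field_simp

lemma le_mul_iInf_aux {x c : ℝ} (hc : 0 ≤ c) (f : ℕ+ → ℝ) (hf : ∀ k, 0 ≤ f k)
    (h : ∀ k, x ≤ c * f k) : x ≤ c * ⨅ k, f k := by
  rcases eq_or_lt_of_le hc with hc0 | hc0
  · have := h 1
    rw [← hc0] at this ⊢
    simpa using this
  · have hinf : x / c ≤ ⨅ k, f k := by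
      refine le_ciInf fun k => ?_
      rw [div_le_iff₀ hc0]
      calc x ≤ c * f k := h k
        _ = f k * c := by ring
    calc x = c * (x / c) := by field_simp
      _ ≤ c * ⨅ k, f k := mul_le_mul_of_nonneg_left hinf hc0.le

end aux

section op

open Bornology

variable {A : Type*} [NormedRing A] [NormedAlgebra ℂ A]

lemma LmulRmul_apply (a b x : A) : ((Lmul a).comp (Rmul b)) x = a * (x * b) := rfl

lemma norm_LmulRmul_le (a b : A) : ‖(Lmul a).comp (Rmul b)‖ ≤ ‖a‖ * ‖b‖ := by
  apply ContinuousLinearMap.opNorm_le_bound _ (mul_nonneg (norm_nonneg a) (norm_nonneg b))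
  intro x
  rw [LmulRmul_apply]
  calc ‖a * (x * b)‖ ≤ ‖a‖ * ‖x * b‖ := norm_mul_le _ _
    _ ≤ ‖a‖ * (‖x‖ * ‖b‖) := mul_le_mul_of_nonneg_left (norm_mul_le _ _) (norm_nonneg a)
    _ = ‖a‖ * ‖b‖ * ‖x‖ := by ring

lemma LmulRmul_mul (a b a' b' : A) :
    (Lmul a).comp (Rmul b) * (Lmul a').comp (Rmul b') =
      (Lmul (a * a')).comp (Rmul (b' * b)) := by
  ext x
  show ((Lmul a).comp (Rmul b)) (((Lmul a').comp (Rmul b')) x) = _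
  rw [LmulRmul_apply, LmulRmul_apply, LmulRmul_apply]
  noncomm_ring

lemma mem_LR_pow {M N : Set A} {n : ℕ} (hn : 1 ≤ n) :
    ∀ T ∈ (LR M N) ^ n, ∃ a ∈ M ^ n, ∃ b ∈ N ^ n, T = (Lmul a).comp (Rmul b) := by
  induction n, hn using Nat.le_induction with
  | base =>
    intro T hT
    rw [pow_one] at hT
    obtain ⟨a, ha, b, hb, rfl⟩ := hT
    exact ⟨a, by rwa [pow_one], b, by rwa [pow_one], rfl⟩
  | succ n hn ih =>
    intro T hT
    rw [pow_succ] at hT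
    obtain ⟨T₁, hT₁, T₂, hT₂, rfl⟩ := hT
    obtain ⟨a, ha, b, hb, rfl⟩ := ih T₁ hT₁
    obtain ⟨a', ha', b', hb', rfl⟩ := hT₂
    refine ⟨a * a', ?_, b' * b, ?_, LmulRmul_mul a b a' b'⟩
    · rw [pow_succ]; exact Set.mul_mem_mul ha ha'
    · rw [pow_succ']; exact Set.mul_mem_mul hb' hb

lemma setNorm_LR_pow_le {M N : Set A} (hM : IsBounded M) (hN : IsBounded N) {n : ℕ}
    (hn : 1 ≤ n) : setNorm ((LR M N) ^ n) ≤ setNorm (M ^ n) * setNorm (N ^ n) := by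
  apply Real.sSup_le
  · rintro x ⟨T, hT, rfl⟩
    obtain ⟨a, ha, b, hb, rfl⟩ := mem_LR_pow hn T hT
    calc ‖(Lmul a).comp (Rmul b)‖ ≤ ‖a‖ * ‖b‖ := norm_LmulRmul_le a b
      _ ≤ setNorm (M ^ n) * setNorm (N ^ n) :=
        mul_le_mul (norm_le_setNorm' (isBounded_pow' hM n) ha)
          (norm_le_setNorm' (isBounded_pow' hN n) hb) (norm_nonneg b) (setNorm_nonneg' _)
  · exact mul_nonneg (setNorm_nonneg' _) (setNorm_nonneg' _)

end op

/-- for bounded subsets `M, N` of a complex Banach algebra,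
`ρ(L_M R_N) ≤ ρ(M) ρ(N)`. -/
theorem jsr_LR_le {A : Type*} [NormedRing A] [NormedAlgebra ℂ A] [CompleteSpace A]
    (M N : Set A) (hM : Bornology.IsBounded M) (hN : Bornology.IsBounded N) :
    jsr (LR M N) ≤ jsr M * jsr N := by
  have hbdd : BddBelow (Set.range fun n : ℕ+ => setNorm ((LR M N) ^ (n : ℕ)) ^ ((n : ℝ)⁻¹)) :=
    ⟨0, by rintro x ⟨n, rfl⟩; exact Real.rpow_nonneg (setNorm_nonneg' _) _⟩
  have key : ∀ m k : ℕ+, jsr (LR M N) ≤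
      setNorm (M ^ (m : ℕ)) ^ ((m : ℝ)⁻¹) * setNorm (N ^ (k : ℕ)) ^ ((k : ℝ)⁻¹) := by
    intro m k
    have h0 : jsr (LR M N) ≤ setNorm ((LR M N) ^ ((m * k : ℕ+) : ℕ)) ^ (((m * k : ℕ+) : ℝ))⁻¹ :=
      ciInf_le hbdd (m * k)
    have h1 : setNorm ((LR M N) ^ ((m * k : ℕ+) : ℕ)) ^ (((m * k : ℕ+) : ℝ))⁻¹ ≤
        (setNorm (M ^ ((m * k : ℕ+) : ℕ)) * setNorm (N ^ ((m * k : ℕ+) : ℕ)))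
          ^ (((m * k : ℕ+) : ℝ))⁻¹ :=
      Real.rpow_le_rpow (setNorm_nonneg' _) (setNorm_LR_pow_le hM hN (m * k).one_le)
        (by positivity)
    have h2 : (setNorm (M ^ ((m * k : ℕ+) : ℕ)) * setNorm (N ^ ((m * k : ℕ+) : ℕ)))
          ^ (((m * k : ℕ+) : ℝ))⁻¹ =
        setNorm (M ^ ((m * k : ℕ+) : ℕ)) ^ (((m * k : ℕ+) : ℝ))⁻¹ *
          setNorm (N ^ ((m * k : ℕ+) : ℕ)) ^ (((m * k : ℕ+) : ℝ))⁻¹ :=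
      Real.mul_rpow (setNorm_nonneg' _) (setNorm_nonneg' _)
    have h3 : setNorm (M ^ ((m * k : ℕ+) : ℕ)) ^ (((m * k : ℕ+) : ℝ))⁻¹ ≤
        setNorm (M ^ (m : ℕ)) ^ ((m : ℝ))⁻¹ := rpow_pow_aux hM m k
    have h4 : setNorm (N ^ ((m * k : ℕ+) : ℕ)) ^ (((m * k : ℕ+) : ℝ))⁻¹ ≤
        setNorm (N ^ (k : ℕ)) ^ ((k : ℝ))⁻¹ := by
      rw [mul_comm m k]
      exact rpow_pow_aux hN k m
    calc jsr (LR M N) ≤ _ := h0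
      _ ≤ _ := h1
      _ = _ := h2
      _ ≤ setNorm (M ^ (m : ℕ)) ^ ((m : ℝ)⁻¹) * setNorm (N ^ (k : ℕ)) ^ ((k : ℝ)⁻¹) :=
        mul_le_mul h3 h4 (Real.rpow_nonneg (setNorm_nonneg' _) _)
          (Real.rpow_nonneg (setNorm_nonneg' _) _)
  have hjN : 0 ≤ jsr N :=
    Real.iInf_nonneg fun n => Real.rpow_nonneg (setNorm_nonneg' _) _
  have step1 : ∀ m : ℕ+, jsr (LR M N) ≤ setNorm (M ^ (m : ℕ)) ^ ((m : ℝ)⁻¹) * jsr N :=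
    fun m => le_mul_iInf_aux (Real.rpow_nonneg (setNorm_nonneg' _) _) _
      (fun k => Real.rpow_nonneg (setNorm_nonneg' _) _) (key m)
  have step2 : jsr (LR M N) ≤ jsr N * jsr M := by
    refine le_mul_iInf_aux hjN _ (fun m => Real.rpow_nonneg (setNorm_nonneg' _) _) fun m => ?_
    calc jsr (LR M N) ≤ setNorm (M ^ (m : ℕ)) ^ ((m : ℝ)⁻¹) * jsr N := step1 m
      _ = jsr N * setNorm (M ^ (m : ℕ)) ^ ((m : ℝ)⁻¹) := by ring
  calc jsr (LR M N) ≤ jsr N * jsr M := step2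
    _ = jsr M * jsr N := by ring
end

section
/- Let J be an ideal of a Banach algebra A. If the algebra J contains a nonzero compact element (an element a ∈ J such that L_a R_a is a compact operator on J), then J contains a nonzero element that is compact as an element of A (i.e., L_a R_a is compact on A). -/
section Defs

variable (B : Type*) [NonUnitalNormedRing B] [NormedSpace ℂ B]
  [SMulCommClass ℂ B B] [IsScalarTower ℂ B B]

/-- A closed two-sided ideal of a (not necessarily unital) complex normed algebra. -/
structure ClosedIdeal where
  carrier : Submodule ℂ B
  isClosed : IsClosed (carrier : Set B)
  mul_mem_left : ∀ (x : B) ⦃a : B⦄, a ∈ carrier → x * a ∈ carrier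
  mul_mem_right : ∀ (x : B) ⦃a : B⦄, a ∈ carrier → a * x ∈ carrier

variable {B}

/-- The two-sided multiplication map `W_b : x ↦ b x b` as a linear map. -/
def Wop (b : B) : B →ₗ[ℂ] B where
  toFun x := b * x * b
  map_add' x y := by simp [mul_add, add_mul]
  map_smul' c x := by simp [mul_smul_comm, smul_mul_assoc]

/-- An element `b` of a Banach algebra is *compact* if `x ↦ b x b` is a compact operator. -/
def IsCompactElt (b : B) : Prop := IsCompactOperator (Wop b)

end Defs

section Instances

variable {B : Type*} [NonUnitalNormedRing B] [NormedSpace ℂ B]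
  [SMulCommClass ℂ B B] [IsScalarTower ℂ B B]

namespace ClosedIdeal

instance (J : ClosedIdeal B) : Mul J.carrier :=
  ⟨fun x y => ⟨(x : B) * y, J.mul_mem_left x y.2⟩⟩

@[simp] theorem coe_mul (J : ClosedIdeal B) (x y : J.carrier) :
    ((x * y : J.carrier) : B) = (x : B) * y := rfl

instance (J : ClosedIdeal B) : NonUnitalNormedRing J.carrier :=
  { (inferInstance : NormedAddCommGroup J.carrier) with
    mul := (· * ·)
    mul_assoc := fun x y z => Subtype.ext (mul_assoc (x : B) y z)
    left_distrib := fun x y z => Subtype.ext (mul_add (x : B) y z)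
    right_distrib := fun x y z => Subtype.ext (add_mul (x : B) y z)
    zero_mul := fun x => Subtype.ext (zero_mul (x : B))
    mul_zero := fun x => Subtype.ext (mul_zero (x : B))
    norm_mul_le := fun x y => norm_mul_le (x : B) y }

instance (J : ClosedIdeal B) : SMulCommClass ℂ J.carrier J.carrier :=
  ⟨fun c x y => Subtype.ext (mul_smul_comm c (x : B) y).symm⟩

instance (J : ClosedIdeal B) : IsScalarTower ℂ J.carrier J.carrier :=
  ⟨fun c x y => Subtype.ext (smul_mul_assoc c (x : B) y)⟩

instance (J : ClosedIdeal B) [CompleteSpace B] : CompleteSpace J.carrier :=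
  J.isClosed.completeSpace_coe

end ClosedIdeal

end Instances

section QuotInstances

variable {B : Type*} [NonUnitalNormedRing B] [NormedSpace ℂ B]
  [SMulCommClass ℂ B B] [IsScalarTower ℂ B B] (J : ClosedIdeal B)

instance : Mul (B ⧸ J.carrier) :=
  ⟨Quotient.map₂ (· * ·) (by
    intro a a' ha b b' hb
    replace ha : a - a' ∈ J.carrier := (Submodule.quotientRel_def _).mp ha
    replace hb : b - b' ∈ J.carrier := (Submodule.quotientRel_def _).mp hb
    refine (Submodule.quotientRel_def _).mpr ?_
    have h : a * b - a' * b' = a * (b - b') + (a - a') * b' := by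
      rw [mul_sub, sub_mul]; abel
    rw [h]
    exact J.carrier.add_mem (J.mul_mem_left a hb) (J.mul_mem_right b' ha))⟩

@[simp] theorem ClosedIdeal.mk_mul (a b : B) :
    (Submodule.Quotient.mk (a * b) : B ⧸ J.carrier) =
      Submodule.Quotient.mk a * Submodule.Quotient.mk b := rfl

end QuotInstances

section QuotRing

variable {B : Type*} [NonUnitalNormedRing B] [NormedSpace ℂ B]
  [SMulCommClass ℂ B B] [IsScalarTower ℂ B B] (J : ClosedIdeal B)

noncomputable instance : NormedAddCommGroup (B ⧸ J.carrier) :=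
  have : IsClosed ((J.carrier : Submodule ℂ B) : Set B) := J.isClosed
  Submodule.Quotient.normedAddCommGroup J.carrier

noncomputable instance : NonUnitalNormedRing (B ⧸ J.carrier) :=
  { (inferInstance : NormedAddCommGroup (B ⧸ J.carrier)) with
    mul := (· * ·)
    mul_assoc := fun q1 q2 q3 => Quotient.inductionOn₃ q1 q2 q3 fun a b c =>
      congrArg Submodule.Quotient.mk (mul_assoc a b c)
    left_distrib := fun q1 q2 q3 => Quotient.inductionOn₃ q1 q2 q3 fun a b c =>
      congrArg Submodule.Quotient.mk (mul_add a b c)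
    right_distrib := fun q1 q2 q3 => Quotient.inductionOn₃ q1 q2 q3 fun a b c =>
      congrArg Submodule.Quotient.mk (add_mul a b c)
    zero_mul := fun q => Quotient.inductionOn q fun a =>
      congrArg Submodule.Quotient.mk (zero_mul a)
    mul_zero := fun q => Quotient.inductionOn q fun a =>
      congrArg Submodule.Quotient.mk (mul_zero a)
    norm_mul_le := fun q1 q2 => by
      have key : ∀ ε : ℝ, 0 < ε → ‖q1 * q2‖ ≤ (‖q1‖ + ε) * (‖q2‖ + ε) := by
        intro ε hε
        obtain ⟨a, rfl, ha⟩ := Submodule.Quotient.norm_mk_lt q1 hε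
        obtain ⟨b, rfl, hb⟩ := Submodule.Quotient.norm_mk_lt q2 hε
        calc ‖(Submodule.Quotient.mk a : B ⧸ J.carrier) * Submodule.Quotient.mk b‖
            = ‖(Submodule.Quotient.mk (a * b) : B ⧸ J.carrier)‖ := by
              rw [ClosedIdeal.mk_mul]
          _ ≤ ‖a * b‖ := Submodule.Quotient.norm_mk_le _ _
          _ ≤ ‖a‖ * ‖b‖ := norm_mul_le a b
          _ ≤ (‖(Submodule.Quotient.mk a : B ⧸ J.carrier)‖ + ε) *
                (‖(Submodule.Quotient.mk b : B ⧸ J.carrier)‖ + ε) := by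
              apply mul_le_mul ha.le hb.le (norm_nonneg b)
              positivity
      have cont : Filter.Tendsto (fun ε : ℝ => (‖q1‖ + ε) * (‖q2‖ + ε))
          (nhdsWithin 0 (Set.Ioi 0)) (nhds (‖q1‖ * ‖q2‖)) := by
        have h0 : Filter.Tendsto (fun ε : ℝ => (‖q1‖ + ε) * (‖q2‖ + ε))
            (nhds 0) (nhds ((‖q1‖ + 0) * (‖q2‖ + 0))) :=
          Continuous.tendsto (by continuity) 0
        simpa using h0.mono_left nhdsWithin_le_nhds
      exact ge_of_tendsto cont
        (Filter.eventually_of_mem self_mem_nhdsWithin fun ε hε => key ε hε) }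

noncomputable instance : SMulCommClass ℂ (B ⧸ J.carrier) (B ⧸ J.carrier) :=
  ⟨fun c q1 q2 => Quotient.inductionOn₂ q1 q2 fun a b =>
    congrArg Submodule.Quotient.mk (mul_smul_comm c a b).symm⟩

noncomputable instance : IsScalarTower ℂ (B ⧸ J.carrier) (B ⧸ J.carrier) :=
  ⟨fun c q1 q2 => Quotient.inductionOn₂ q1 q2 fun a b =>
    congrArg Submodule.Quotient.mk (smul_mul_assoc c a b)⟩

end QuotRing

section Hypo

variable (B : Type*) [NonUnitalNormedRing B] [NormedSpace ℂ B]
  [SMulCommClass ℂ B B] [IsScalarTower ℂ B B]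

/-- A Banach algebra is *hypocompact* if every nonzero quotient by a closed
two-sided ideal contains a nonzero compact element. -/
def IsHypocompact : Prop :=
  ∀ J : ClosedIdeal B, J.carrier ≠ ⊤ →
    ∃ q : B ⧸ J.carrier, q ≠ 0 ∧ IsCompactElt q

end Hypo

/-! If `a` is compact in `J`, then for every `y ∈ A` the element `c = a y a` of `J` is compact
in `A`: `c z c = a (y a z a y) a` and `z ↦ y a z a y` is a bounded map `A → J`, so `W_c`
factors through the compact operator `W_a` of `J`. If all these `c` vanish, then `W_a = 0`
on `A` and `a` itself is compact in `A`. -/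

section CompactElement

variable {B : Type*} [NonUnitalNormedRing B] [NormedSpace ℂ B]
  [SMulCommClass ℂ B B] [IsScalarTower ℂ B B]

theorem isCompactElt_of_forall_mul_mul_eq_zero {b : B} (hb : ∀ x, b * x * b = 0) :
    IsCompactElt b := by
  have hW : ⇑(Wop b) = 0 := funext hb
  rw [IsCompactElt, hW]
  exact isCompactOperator_zero

theorem ClosedIdeal.isCompactElt_mul_mul (J : ClosedIdeal B) {a : J.carrier}
    (ha : IsCompactElt a) (y : B) : IsCompactElt ((a : B) * y * a) := by
  let f : B →L[ℂ] J.carrier :=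
    (ContinuousLinearMap.mulLeftRight ℂ B (y * a) (a * y)).codRestrict J.carrier
      fun z => by
        simpa [mul_assoc] using J.mul_mem_right y (J.mul_mem_left (y * a * z) a.2)
  have hW : ⇑(Wop ((a : B) * y * a)) = J.carrier.subtypeL ∘ Wop a ∘ f := by
    funext z
    simp [Wop, f, mul_assoc]
  rw [IsCompactElt, hW]
  exact (ha.comp_clm f).continuous_comp J.carrier.subtypeL.continuous

end CompactElement

theorem ideal_compactElement_of_compactElement_general {A : Type*} [NonUnitalNormedRing A]
    [NormedSpace ℂ A] [SMulCommClass ℂ A A] [IsScalarTower ℂ A A]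
    (J : ClosedIdeal A) (h : ∃ a : J.carrier, a ≠ 0 ∧ IsCompactElt a) :
    ∃ c : A, c ∈ J.carrier ∧ c ≠ 0 ∧ IsCompactElt c := by
  obtain ⟨a, ha0, ha⟩ := h
  by_cases hzero : ∀ y : A, (a : A) * y * a = 0
  · exact ⟨a, a.2, by simpa using ha0, isCompactElt_of_forall_mul_mul_eq_zero hzero⟩
  · push Not at hzero
    obtain ⟨y, hy⟩ := hzero
    exact ⟨_, J.mul_mem_right a (J.mul_mem_right y a.2), hy, J.isCompactElt_mul_mul ha y⟩

/-- if a closed ideal `J` of a Banach algebra `A` contains a nonzero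
compact element (as an element of the Banach algebra `J`), then `J` contains a
nonzero element that is compact as an element of `A`. -/
theorem ideal_compactElement_of_compactElement {A : Type*} [NonUnitalNormedRing A]
    [NormedSpace ℂ A] [SMulCommClass ℂ A A] [IsScalarTower ℂ A A] [CompleteSpace A]
    (J : ClosedIdeal A) (h : ∃ a : J.carrier, a ≠ 0 ∧ IsCompactElt a) :
    ∃ c : A, c ∈ J.carrier ∧ c ≠ 0 ∧ IsCompactElt c :=
  ideal_compactElement_of_compactElement_general J h
end

section
/- Let A be a Banach algebra and J = closure of the union of an increasing net (J_α) of closed ideals. Then for every precompact subset M of A: ‖M/J‖ = inf_α ‖M/J_α‖ = lim_α ‖M/J_α‖, and ρ(M/J) = inf_α ρ(M/J_α) = lim_α ρ(M/J_α), where M/I denotes the image of M in A/I, ‖·‖ the sup of norms, and ρ the joint spectral radius. -/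
open scoped Pointwise
open Filter

variable {A : Type*} [NormedRing A] [NormedAlgebra ℂ A]

/-- The quotient norm of `a` modulo a closed ideal `J`: `‖a/J‖ = dist(a, J)`. -/
noncomputable def qNorm (J : ClosedIdeal A) (a : A) : ℝ :=
  Metric.infDist a (J.carrier : Set A)

/-- The norm `‖M/J‖` of the image of `M` in `A/J`. -/
noncomputable def qSetNorm (J : ClosedIdeal A) (M : Set A) : ℝ :=
  sSup ((fun a => qNorm J a) '' M)

/-- The joint spectral radius `ρ(M/J)` of the image of `M` in `A/J`. -/
noncomputable def qjsr (J : ClosedIdeal A) (M : Set A) : ℝ :=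
  ⨅ n : ℕ+, (qSetNorm J (M ^ (n : ℕ))) ^ ((n : ℝ)⁻¹)

/-!
The maps `a ↦ dist(a, J_α)` are 1-Lipschitz, decrease in `α`, and have infimum `dist(a, J)` because
`J` is the closure of the union. Choosing at each point of a finite `ε`-net of `M` an index that is
`ε`-good there, any index above all of them is `3ε`-good on all of `M`; hence `‖M/J_α‖ ↓ ‖M/J‖`.
As every power `M^n` is again precompact, `inf_α ρ(M/J_α) ≤ lim_α ‖M^n/J_α‖^{1/n} = ‖M^n/J‖^{1/n}`
for each `n`, while `ρ(M/J) ≤ ρ(M/J_α)` holds termwise.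
-/

open Topology Metric Bornology

section InfDist

variable {X : Type*} [PseudoMetricSpace X] {ι : Type*}

theorem Metric.infDist_closure_iUnion [Nonempty ι] {s : ι → Set X} (hs : ∀ i, (s i).Nonempty)
    (x : X) : infDist x (closure (⋃ i, s i)) = ⨅ i, infDist x (s i) := by
  rw [infDist_closure]
  refine le_antisymm
    (le_ciInf fun i => infDist_le_infDist_of_subset (Set.subset_iUnion s i) (hs i)) ?_
  refine le_of_forall_gt fun c hc => ?_
  have hU : (⋃ i, s i).Nonempty :=
    (hs (Classical.arbitrary ι)).mono (Set.subset_iUnion s _)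
  obtain ⟨y, hy, hxy⟩ := (infDist_lt_iff hU).1 hc
  obtain ⟨i, hi⟩ := Set.mem_iUnion.1 hy
  exact (ciInf_le ⟨0, Set.forall_mem_range.2 fun _ => infDist_nonneg⟩ i).trans_lt
    ((infDist_le_dist_of_mem hi).trans_lt hxy)

theorem Metric.exists_forall_infDist_lt_add_of_totallyBounded [Preorder ι]
    [Nonempty ι] [IsDirected ι (· ≤ ·)] {s : ι → Set X} (hmono : Monotone s)
    (hs : ∀ i, (s i).Nonempty) {M : Set X} (hM : TotallyBounded M) {ε : ℝ} (hε : 0 < ε) :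
    ∃ i, ∀ x ∈ M, infDist x (s i) < infDist x (closure (⋃ i, s i)) + ε := by
  obtain ⟨t, ht, hMt⟩ := Metric.totallyBounded_iff.1 hM (ε / 3) (by positivity)
  have hpoint : ∀ y, ∃ i, infDist y (s i) < infDist y (closure (⋃ i, s i)) + ε / 3 := by
    intro y
    rw [infDist_closure_iUnion hs]
    exact exists_lt_of_ciInf_lt (lt_add_of_pos_right _ (by positivity))
  choose g hg using hpoint
  obtain ⟨i, hi⟩ := (ht.image g).bddAbove
  refine ⟨i, fun x hx => ?_⟩
  obtain ⟨y, hyt, hxy⟩ := Set.mem_iUnion₂.1 (hMt hx)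
  rw [mem_ball] at hxy
  calc infDist x (s i) ≤ infDist y (s i) + dist x y := infDist_le_infDist_add_dist
    _ ≤ infDist y (s (g y)) + dist x y := by
      gcongr
      exact infDist_le_infDist_of_subset (hmono (hi ⟨y, hyt, rfl⟩)) (hs _)
    _ < infDist y (closure (⋃ i, s i)) + ε / 3 + dist x y := by gcongr; exact hg y
    _ ≤ infDist x (closure (⋃ i, s i)) + dist y x + ε / 3 + dist x y := by
      gcongr; exact infDist_le_infDist_add_dist
    _ < infDist x (closure (⋃ i, s i)) + ε := by linarith [dist_comm x y]

end InfDist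

theorem TotallyBounded.pow {R : Type*} [NormedRing R] [CompleteSpace R] {M : Set R}
    (hM : TotallyBounded M) (n : ℕ) : TotallyBounded (M ^ n) := by
  have hK : IsCompact (_root_.closure M) := hM.closure.isCompact_of_isClosed isClosed_closure
  have hKn : IsCompact (_root_.closure M ^ n) := by
    induction n with
    | zero => rw [pow_zero]; exact isCompact_singleton
    | succ k ih => rw [pow_succ]; exact ih.mul hK
  exact hKn.totallyBounded.subset (Set.pow_subset_pow_left subset_closure)

section Quotient

lemma qSetNorm_nonneg (I : ClosedIdeal A) (M : Set A) : 0 ≤ qSetNorm I M :=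
  Real.sSup_nonneg (by rintro _ ⟨a, -, rfl⟩; exact infDist_nonneg)

lemma qNorm_le_qSetNorm (I : ClosedIdeal A) {M : Set A} (hM : IsBounded M) {a : A}
    (ha : a ∈ M) : qNorm I a ≤ qSetNorm I M := by
  obtain ⟨C, hC⟩ := isBounded_iff_forall_norm_le.1 hM
  have hbdd : BddAbove ((fun a => qNorm I a) '' M) := by
    refine ⟨C, ?_⟩
    rintro _ ⟨b, hb, rfl⟩
    calc qNorm I b ≤ dist b 0 := infDist_le_dist_of_mem I.carrier.zero_mem
      _ ≤ C := by rw [dist_zero_right]; exact hC b hb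
  exact le_csSup hbdd ⟨a, ha, rfl⟩

lemma qSetNorm_le {I : ClosedIdeal A} {M : Set A} {c : ℝ} (hc : 0 ≤ c)
    (h : ∀ a ∈ M, qNorm I a ≤ c) : qSetNorm I M ≤ c :=
  Real.sSup_le (by rintro _ ⟨a, ha, rfl⟩; exact h a ha) hc

lemma qSetNorm_anti {I I' : ClosedIdeal A} (h : (I.carrier : Set A) ⊆ I'.carrier) {M : Set A}
    (hM : IsBounded M) : qSetNorm I' M ≤ qSetNorm I M :=
  qSetNorm_le (qSetNorm_nonneg I M) fun _ ha =>
    (infDist_le_infDist_of_subset h ⟨0, I.carrier.zero_mem⟩).trans (qNorm_le_qSetNorm I hM ha)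

lemma qjsr_nonneg (I : ClosedIdeal A) (M : Set A) : 0 ≤ qjsr I M :=
  Real.iInf_nonneg fun _ => Real.rpow_nonneg (qSetNorm_nonneg _ _) _

lemma qjsr_le (I : ClosedIdeal A) (M : Set A) (n : ℕ+) :
    qjsr I M ≤ qSetNorm I (M ^ (n : ℕ)) ^ ((n : ℝ)⁻¹) :=
  ciInf_le ⟨0, Set.forall_mem_range.2 fun _ => Real.rpow_nonneg (qSetNorm_nonneg _ _) _⟩ n

lemma qjsr_anti {I I' : ClosedIdeal A} (h : (I.carrier : Set A) ⊆ I'.carrier) {M : Set A}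
    (hM : ∀ n : ℕ, IsBounded (M ^ n)) : qjsr I' M ≤ qjsr I M :=
  le_ciInf fun n => (qjsr_le I' M n).trans <|
    Real.rpow_le_rpow (qSetNorm_nonneg _ _) (qSetNorm_anti h (hM n)) (by positivity)

variable {ι : Type*} {Jf : ι → ClosedIdeal A} {J : ClosedIdeal A} {M : Set A}

lemma carrier_subset_of_eq_closure_iUnion
    (hJ : (J.carrier : Set A) = closure (⋃ α, ((Jf α).carrier : Set A))) (α : ι) :
    ((Jf α).carrier : Set A) ⊆ J.carrier :=
  hJ ▸ (Set.subset_iUnion (fun α => ((Jf α).carrier : Set A)) α).trans subset_closure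

variable [Preorder ι] [Nonempty ι] [IsDirected ι (· ≤ ·)]

theorem qSetNorm_eq_iInf_of_directed (hmono : Monotone fun α => (Jf α).carrier)
    (hJ : (J.carrier : Set A) = closure (⋃ α, ((Jf α).carrier : Set A)))
    (hM : TotallyBounded M) : qSetNorm J M = ⨅ α, qSetNorm (Jf α) M := by
  refine le_antisymm (le_ciInf fun α =>
    qSetNorm_anti (carrier_subset_of_eq_closure_iUnion hJ α) hM.isBounded) ?_
  refine le_of_forall_pos_le_add fun ε hε => ?_
  obtain ⟨α, hα⟩ := exists_forall_infDist_lt_add_of_totallyBounded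
    (fun _ _ h => hmono h) (fun α => ⟨0, (Jf α).carrier.zero_mem⟩) hM hε
  refine (ciInf_le ⟨0, Set.forall_mem_range.2 fun _ => qSetNorm_nonneg _ _⟩ α).trans ?_
  refine qSetNorm_le (by linarith [qSetNorm_nonneg J M]) fun a ha => (hα a ha).le.trans ?_
  rw [← hJ]
  exact add_le_add_left (qNorm_le_qSetNorm J hM.isBounded ha) ε

theorem tendsto_qSetNorm_of_directed (hmono : Monotone fun α => (Jf α).carrier)
    (hJ : (J.carrier : Set A) = closure (⋃ α, ((Jf α).carrier : Set A)))
    (hM : TotallyBounded M) :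
    Tendsto (fun α => qSetNorm (Jf α) M) atTop (𝓝 (qSetNorm J M)) := by
  rw [qSetNorm_eq_iInf_of_directed hmono hJ hM]
  exact tendsto_atTop_ciInf (fun _ _ h => qSetNorm_anti (hmono h) hM.isBounded)
    ⟨0, Set.forall_mem_range.2 fun _ => qSetNorm_nonneg _ _⟩

theorem qjsr_eq_iInf_of_directed [CompleteSpace A] (hmono : Monotone fun α => (Jf α).carrier)
    (hJ : (J.carrier : Set A) = closure (⋃ α, ((Jf α).carrier : Set A)))
    (hM : TotallyBounded M) : qjsr J M = ⨅ α, qjsr (Jf α) M := by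
  refine le_antisymm (le_ciInf fun α =>
    qjsr_anti (carrier_subset_of_eq_closure_iUnion hJ α) fun n => (hM.pow n).isBounded) ?_
  refine le_ciInf fun n => ge_of_tendsto
    ((tendsto_qSetNorm_of_directed hmono hJ (hM.pow n)).rpow_const (.inr (by positivity))) ?_
  exact Eventually.of_forall fun α =>
    (ciInf_le ⟨0, Set.forall_mem_range.2 fun _ => qjsr_nonneg _ _⟩ α).trans (qjsr_le _ M n)

theorem tendsto_qjsr_of_directed [CompleteSpace A] (hmono : Monotone fun α => (Jf α).carrier)
    (hJ : (J.carrier : Set A) = closure (⋃ α, ((Jf α).carrier : Set A)))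
    (hM : TotallyBounded M) : Tendsto (fun α => qjsr (Jf α) M) atTop (𝓝 (qjsr J M)) := by
  rw [qjsr_eq_iInf_of_directed hmono hJ hM]
  exact tendsto_atTop_ciInf (fun _ _ h => qjsr_anti (hmono h) fun n => (hM.pow n).isBounded)
    ⟨0, Set.forall_mem_range.2 fun _ => qjsr_nonneg _ _⟩

end Quotient

/-- if `J` is the closure of the union of an increasing net
`(J_α)` of closed ideals of a Banach algebra `A`, then for every precompact
`M ⊆ A` one has `‖M/J‖ = inf_α ‖M/J_α‖ = lim_α ‖M/J_α‖` and
`ρ(M/J) = inf_α ρ(M/J_α) = lim_α ρ(M/J_α)`. -/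
theorem qSetNorm_qjsr_of_directed_union {A : Type*} [NormedRing A] [NormedAlgebra ℂ A]
    [CompleteSpace A] {ι : Type*} [Preorder ι] [Nonempty ι] [IsDirected ι (· ≤ ·)]
    (Jf : ι → ClosedIdeal A) (hmono : Monotone fun α => (Jf α).carrier)
    (J : ClosedIdeal A)
    (hJ : (J.carrier : Set A) = closure (⋃ α, ((Jf α).carrier : Set A)))
    (M : Set A) (hM : TotallyBounded M) :
    (qSetNorm J M = ⨅ α, qSetNorm (Jf α) M) ∧
    Tendsto (fun α => qSetNorm (Jf α) M) atTop (nhds (qSetNorm J M)) ∧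
    (qjsr J M = ⨅ α, qjsr (Jf α) M) ∧
    Tendsto (fun α => qjsr (Jf α) M) atTop (nhds (qjsr J M)) :=
  ⟨qSetNorm_eq_iInf_of_directed hmono hJ hM, tendsto_qSetNorm_of_directed hmono hJ hM,
    qjsr_eq_iInf_of_directed hmono hJ hM, tendsto_qjsr_of_directed hmono hJ hM⟩
end
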